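/- For any distance space X, the injective envelope EX is itself an injective distance space: for every isometry i : EX → Z into a distance space Z there exists a non-expanding map r : Z → EX with r ∘ i = id_{EX}. -/

import Mathlib

open scoped ENNReal

universe u

structure DistSpace (X : Type u) where
  d : X → X → ℝ≥0∞
  refl : ∀ x, d x x = 0
  symm : ∀ x y, d x y = d y x
  triangle : ∀ x y z, d x z ≤ d x y + d y z

def Delta {X : Type u} (D : DistSpace X) : Set (X → ℝ≥0∞) :=
  {f | ∀ x y, D.d x y ≤ f x + f y}

def Extremal {X : Type u} (D : DistSpace X) (f : X → ℝ≥0∞) : Prop :=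
  f ∈ Delta D ∧ ∀ g ∈ Delta D, g ≤ f → g = f

noncomputable def supDist {X : Type u} (f g : X → ℝ≥0∞) : ℝ≥0∞ :=
  ⨆ x, (f x - g x) ⊔ (g x - f x)

theorem extremal_ddist {X : Type u} (D : DistSpace X) (x : X) :
    Extremal D (fun z => D.d x z) := by
  constructor
  · intro y z
    calc D.d y z ≤ D.d y x + D.d x z := D.triangle y x z
    _ = D.d x y + D.d x z := by rw [D.symm y x]
  · intro g hg hle
    funext z
    have hx : g x = 0 := le_antisymm (by simpa [D.refl] using hle x) zero_le
    have h1 : D.d x z ≤ g z := by simpa [hx] using hg x z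
    exact le_antisymm (hle z) h1

/-- The injective envelope `EX` of a distance space `X`: the set of extremal
functions, with the sup-distance. -/
def EnvType {X : Type u} (D : DistSpace X) : Type u :=
  {f : X → ℝ≥0∞ // Extremal D f}

/-- The canonical isometric embedding `e_X : X → EX`, `x ↦ d_X(x,·)`. -/
noncomputable def eEnv {X : Type u} (D : DistSpace X) (x : X) : EnvType D :=
  ⟨fun z => D.d x z, extremal_ddist D x⟩

/-!
An extremal function `f` is tight: `f x = ⨆ y, d x y - f y`, since lowering `f x` to that
supremum keeps `f` in `Delta`. By Zorn's lemma every `h ∈ Delta` dominates an extremal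
function. Together these make `EX` hyperconvex: if `d(g_j, g_k) ≤ ρ_j + ρ_k` for all `j, k`,
then `x ↦ ⨅ j, g_j x + ρ_j` lies in `Delta`, and any extremal function below it lies in every
ball `B(g_j, ρ_j)`. A hyperconvex space is injective: by Zorn's lemma the non-expanding relations
`Z → W` containing the graph of `i⁻¹` have a maximal element, and hyperconvexity lets any such
relation be extended to a further point of `Z`, so the maximal one is defined everywhere.
-/

universe v w

open Set

section SupDist

variable {X : Type u} {f g : X → ℝ≥0∞}

lemma supDist_le_iff {r : ℝ≥0∞} :
    supDist f g ≤ r ↔ ∀ x, f x ≤ g x + r ∧ g x ≤ f x + r := by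
  simp only [supDist, iSup_le_iff, sup_le_iff, tsub_le_iff_right, add_comm r]

lemma supDist_comm (f g : X → ℝ≥0∞) : supDist f g = supDist g f :=
  iSup_congr fun _ => sup_comm _ _

lemma supDist_self (f : X → ℝ≥0∞) : supDist f f = 0 := by
  simp [supDist]

lemma supDist_triangle (f g h : X → ℝ≥0∞) : supDist f h ≤ supDist f g + supDist g h := by
  have hfg := supDist_le_iff.1 (le_refl (supDist f g))
  have hgh := supDist_le_iff.1 (le_refl (supDist g h))
  refine supDist_le_iff.2 fun x => ⟨?_, ?_⟩
  · calc f x ≤ g x + supDist f g := (hfg x).1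
      _ ≤ h x + supDist g h + supDist f g := by gcongr; exact (hgh x).1
      _ = h x + (supDist f g + supDist g h) := by ring
  · calc h x ≤ g x + supDist g h := (hgh x).2
      _ ≤ f x + supDist f g + supDist g h := by gcongr; exact (hfg x).2
      _ = f x + (supDist f g + supDist g h) := by ring

lemma eq_of_supDist_eq_zero (h : supDist f g = 0) : f = g :=
  funext fun x => le_antisymm (by simpa using ((supDist_le_iff.1 h.le) x).1)
    (by simpa using ((supDist_le_iff.1 h.le) x).2)

end SupDist

noncomputable def envDistSpace {X : Type u} (D : DistSpace X) : DistSpace (EnvType D) where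
  d f g := supDist f.1 g.1
  refl f := supDist_self f.1
  symm f g := supDist_comm f.1 g.1
  triangle f g h := supDist_triangle f.1 g.1 h.1

namespace DistSpace

variable {W : Type v} {Z : Type w}

/-- A family of closed balls is encoded as the set of pairs `(center, radius)`. -/
def Hyperconvex (DW : DistSpace W) : Prop :=
  ∀ B : Set (W × ℝ≥0∞), (∀ p ∈ B, ∀ q ∈ B, DW.d p.1 q.1 ≤ p.2 + q.2) →
    ∃ w, ∀ p ∈ B, DW.d w p.1 ≤ p.2

def IsNonexpandingRel (DZ : DistSpace Z) (DW : DistSpace W) (s : Set (Z × W)) : Prop :=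
  ∀ p ∈ s, ∀ q ∈ s, DW.d p.2 q.2 ≤ DZ.d p.1 q.1

variable {DZ : DistSpace Z} {DW : DistSpace W}

lemma _root_.IsChain.isNonexpandingRel_sUnion {c : Set (Set (Z × W))} (hc : IsChain (· ⊆ ·) c)
    (h : ∀ s ∈ c, IsNonexpandingRel DZ DW s) : IsNonexpandingRel DZ DW (⋃₀ c) := by
  rintro p ⟨s, hs, hp⟩ q ⟨t, ht, hq⟩
  rcases hc.total hs ht with hst | hts
  · exact h t ht p (hst hp) q hq
  · exact h s hs p hp q (hts hq)

lemma Hyperconvex.exists_isNonexpandingRel_insert (hW : DW.Hyperconvex) {s : Set (Z × W)}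
    (hs : IsNonexpandingRel DZ DW s) (z : Z) :
    ∃ w, IsNonexpandingRel DZ DW (insert (z, w) s) := by
  obtain ⟨w, hw⟩ := hW ((fun p => (p.2, DZ.d z p.1)) '' s) <| by
    rintro _ ⟨p, hp, rfl⟩ _ ⟨q, hq, rfl⟩
    calc DW.d p.2 q.2 ≤ DZ.d p.1 q.1 := hs p hp q hq
      _ ≤ DZ.d p.1 z + DZ.d z q.1 := DZ.triangle _ _ _
      _ = DZ.d z p.1 + DZ.d z q.1 := by rw [DZ.symm p.1]
  have hzw : ∀ p ∈ s, DW.d w p.2 ≤ DZ.d z p.1 := fun p hp => hw _ ⟨p, hp, rfl⟩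
  refine ⟨w, ?_⟩
  rintro p (rfl | hp) q (rfl | hq)
  · simp [DW.refl]
  · exact hzw q hq
  · rw [DW.symm, DZ.symm]
    exact hzw p hp
  · exact hs p hp q hq

theorem Hyperconvex.exists_retraction (hW : DW.Hyperconvex)
    (hsep : ∀ a b, DW.d a b = 0 → a = b) (i : W → Z)
    (hi : ∀ a b, DW.d a b ≤ DZ.d (i a) (i b)) :
    ∃ r : Z → W, (∀ a b, DW.d (r a) (r b) ≤ DZ.d a b) ∧ ∀ a, r (i a) = a := by
  let S : Set (Set (Z × W)) :=
    {s | range (fun a => (i a, a)) ⊆ s ∧ IsNonexpandingRel DZ DW s}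
  have hchain : ∀ c ⊆ S, IsChain (· ⊆ ·) c → c.Nonempty →
      ∃ ub ∈ S, ∀ s ∈ c, s ⊆ ub := fun c hcS hc ⟨s, hs⟩ =>
    ⟨⋃₀ c, ⟨(hcS hs).1.trans (subset_sUnion_of_mem hs),
      hc.isNonexpandingRel_sUnion fun t ht => (hcS ht).2⟩, fun _ => subset_sUnion_of_mem⟩
  obtain ⟨m, -, ⟨hgraph, hm⟩, hmax⟩ := zorn_subset_nonempty S hchain _
    ⟨subset_rfl, by rintro _ ⟨a, rfl⟩ _ ⟨b, rfl⟩; exact hi a b⟩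
  have htotal : ∀ z, ∃ w, (z, w) ∈ m := fun z => by
    obtain ⟨w, hw⟩ := hW.exists_isNonexpandingRel_insert hm z
    exact ⟨w, hmax ⟨hgraph.trans (subset_insert _ _), hw⟩ (subset_insert _ _)
      (mem_insert _ _)⟩
  choose r hr using htotal
  refine ⟨r, fun a b => hm _ (hr a) _ (hr b), fun a => hsep _ _ (le_antisymm ?_ zero_le)⟩
  simpa [DZ.refl] using hm _ (hr (i a)) _ (hgraph ⟨a, rfl⟩)

end DistSpace

section Envelope

variable {X : Type u} {D : DistSpace X}

lemma Extremal.apply_eq_iSup {f : X → ℝ≥0∞} (hf : Extremal D f) (x : X) :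
    f x = ⨆ y, D.d x y - f y := by
  classical
  set s := ⨆ y, D.d x y - f y
  have hs : ∀ y, D.d x y ≤ s + f y := fun y =>
    tsub_le_iff_right.1 (le_iSup (fun y => D.d x y - f y) y)
  have hsf : s ≤ f x := iSup_le fun y => tsub_le_iff_right.2 (hf.1 x y)
  have hDelta : Function.update f x s ∈ Delta D := by
    intro a b
    by_cases ha : a = x <;> by_cases hb : b = x
    · simp [ha, hb, D.refl]
    · simpa [ha, Function.update_of_ne hb] using hs b
    · simpa [hb, Function.update_of_ne ha, D.symm a, add_comm] using hs a
    · simpa [Function.update_of_ne ha, Function.update_of_ne hb] using hf.1 a b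
  have hle : Function.update f x s ≤ f := by
    intro a
    rcases eq_or_ne a x with rfl | ha
    · simpa using hsf
    · simp [Function.update_of_ne ha]
  simpa using (congrFun (hf.2 _ hDelta hle) x).symm

lemma IsChain.sInf_mem_Delta {c : Set (X → ℝ≥0∞)} (hc : IsChain (· ≤ ·) c)
    (hcD : c ⊆ Delta D) : sInf c ∈ Delta D := by
  intro x y
  rw [sInf_apply, sInf_apply, ENNReal.iInf_add_iInf]
  · exact le_iInf fun g => hcD g.2 x y
  · rintro ⟨g, hg⟩ ⟨g', hg'⟩
    rcases hc.total hg hg' with h | h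
    · exact ⟨⟨g, hg⟩, add_le_add le_rfl (h y)⟩
    · exact ⟨⟨g', hg'⟩, add_le_add (h x) le_rfl⟩

lemma exists_extremal_le {h : X → ℝ≥0∞} (hh : h ∈ Delta D) :
    ∃ f, Extremal D f ∧ f ≤ h := by
  obtain ⟨m, hhm, hmD, hm⟩ := zorn_le_nonempty₀ (α := (X → ℝ≥0∞)ᵒᵈ)
    {g | OrderDual.ofDual g ∈ Delta D}
    (fun c hcD hc _ _ => ⟨sSup c, IsChain.sInf_mem_Delta hc.symm hcD, fun _ => le_sSup⟩)
    (OrderDual.toDual h) hh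
  exact ⟨OrderDual.ofDual m, ⟨hmD, fun g hg hgm => (hm hg hgm).antisymm hgm⟩, hhm⟩

end Envelope

theorem hyperconvex_envDistSpace {X : Type u} (D : DistSpace X) : (envDistSpace D).Hyperconvex := by
  intro B hB
  set h : X → ℝ≥0∞ := fun x => ⨅ p : B, p.1.1.1 x + p.1.2
  have h_le : ∀ p ∈ B, ∀ x, h x ≤ p.1.1 x + p.2 := fun p hp x =>
    iInf_le (fun p : B => p.1.1.1 x + p.1.2) ⟨p, hp⟩
  have hh : h ∈ Delta D := by
    intro x y
    simp only [h, ENNReal.iInf_add, ENNReal.add_iInf]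
    refine le_iInf fun ⟨q, hq⟩ => le_iInf fun ⟨p, hp⟩ => ?_
    have hpq := (supDist_le_iff.1 (hB p hp q hq) x).2
    calc D.d x y ≤ q.1.1 x + q.1.1 y := q.1.2.1 x y
      _ ≤ p.1.1 x + (p.2 + q.2) + q.1.1 y := by gcongr
      _ = p.1.1 x + p.2 + (q.1.1 y + q.2) := by ring
  obtain ⟨f, hf, hfh⟩ := exists_extremal_le hh
  refine ⟨⟨f, hf⟩, fun p hp =>
    supDist_le_iff.2 fun x => ⟨(hfh x).trans (h_le p hp x), ?_⟩⟩
  rw [p.1.2.apply_eq_iSup x]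
  refine iSup_le fun y => tsub_le_iff_right.2 ?_
  calc D.d x y ≤ f x + f y := hf.1 x y
    _ ≤ f x + (p.1.1 y + p.2) := by gcongr; exact (hfh y).trans (h_le p hp y)
    _ = f x + p.2 + p.1.1 y := by ring

/-- The injective envelope `EX` is itself injective: every isometry
`i : EX → Z` into a distance space admits a non-expanding left inverse. -/
theorem stmt8 {X : Type u} (D : DistSpace X) (Z : Type u) (DZ : DistSpace Z)
    (i : EnvType D → Z) (hi : ∀ f g : EnvType D, DZ.d (i f) (i g) = supDist f.1 g.1) :
    ∃ r : Z → EnvType D,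
      (∀ a b : Z, supDist (r a).1 (r b).1 ≤ DZ.d a b) ∧ ∀ f, r (i f) = f :=
  (hyperconvex_envDistSpace D).exists_retraction
    (fun _ _ h => Subtype.ext (eq_of_supDist_eq_zero h)) i fun f g => (hi f g).ge
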